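/- arXiv:1305.3871 — 4 statements merged into one kernel-verified Lean document; each statement's English description precedes it below -/
import Mathlib

section
/- Let n > 2 and let A_l, B_{hk} (l,h,k = 1,...,n) be real numbers satisfying B_{hk} = B_{kh} and A_l B_{hk} + A_h B_{kl} + A_k B_{lh} = 0 for all indices l, h, k. Then either A_l = 0 for all l, or B_{hk} = 0 for all h, k. -/
/-- Walker's lemma. -/
theorem walker_lemma (n : ℕ) (hn : 2 < n) (A : Fin n → ℝ) (B : Fin n → Fin n → ℝ)
    (hB : ∀ h k, B h k = B k h)
    (hcyc : ∀ l h k, A l * B h k + A h * B k l + A k * B l h = 0) :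
    (∀ l, A l = 0) ∨ (∀ h k, B h k = 0) := by
  by_cases hA : ∀ l, A l = 0
  · exact Or.inl hA
  · push_neg at hA
    obtain ⟨l, hl⟩ := hA
    refine Or.inr fun h k => ?_
    have h1 := hcyc l l l
    have hll : B l l = 0 := by
      have e : A l * B l l = 0 := by linarith
      exact (mul_eq_zero.mp e).resolve_left hl
    have h2 := hcyc l l h
    have hlh : B l h = 0 := by
      have hs := hB h l
      have e : A l * B l h = 0 := by
        rw [hs] at h2; rw [hll] at h2; linarith
      exact (mul_eq_zero.mp e).resolve_left hl
    have h3 := hcyc l l k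
    have hlk : B l k = 0 := by
      have hs := hB k l
      have e : A l * B l k = 0 := by
        rw [hs] at h3; rw [hll] at h3; linarith
      exact (mul_eq_zero.mp e).resolve_left hl
    have h4 := hcyc l h k
    have e : A l * B h k = 0 := by
      rw [hB k l, hlk, hlh] at h4; linarith
    exact (mul_eq_zero.mp e).resolve_left hl
end

section
/- Let V be a finite-dimensional real inner product space of dimension n > 2 with inner product g, and let A, B, F be bilinear forms on V satisfying g(X,Y)F(U,V) + g(U,V)B(X,Y) + g(Y,V)A(X,U) + g(X,V)A(Y,U) + g(Y,U)A(X,V) + g(X,U)A(Y,V) = 0 for all vectors X, Y, U, V. Then F and B are symmetric, A = 0, B + F = 0, and n·F = (Tr F)·g and n·B = (Tr B)·g (where the trace is taken with respect to g). -/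
section AuxBFD

variable {V : Type*} [NormedAddCommGroup V] [InnerProductSpace ℝ V] {n : ℕ}

private lemma bfd_tr (b : OrthonormalBasis (Fin n) ℝ V) :
    ∑ i, (inner ℝ (b i) (b i) : ℝ) = (n : ℝ) := by
  have : ∀ i : Fin n, (inner ℝ (b i) (b i) : ℝ) = 1 := fun i => by
    rw [real_inner_self_eq_norm_sq, b.orthonormal.1 i]; norm_num
  simp [this]

private lemma bfd_c1 (b : OrthonormalBasis (Fin n) ℝ V) (T : V →ₗ[ℝ] V →ₗ[ℝ] ℝ) (W U : V) :
    ∑ i, (inner ℝ (b i) W : ℝ) * T (b i) U = T W U := by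
  conv_rhs => rw [← b.sum_repr W]
  simp [map_sum, LinearMap.sum_apply, LinearMap.smul_apply, b.repr_apply_apply,
    smul_eq_mul]

private lemma bfd_c1' (b : OrthonormalBasis (Fin n) ℝ V) (T : V →ₗ[ℝ] V →ₗ[ℝ] ℝ) (W U : V) :
    ∑ i, (inner ℝ W (b i) : ℝ) * T (b i) U = T W U := by
  have hc : ∀ i : Fin n, (inner ℝ W (b i) : ℝ) = inner ℝ (b i) W := fun i => real_inner_comm _ _
  simp_rw [hc]
  exact bfd_c1 b T W U

private lemma bfd_c2 (b : OrthonormalBasis (Fin n) ℝ V) (T : V →ₗ[ℝ] V →ₗ[ℝ] ℝ) (U W : V) :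
    ∑ i, (inner ℝ W (b i) : ℝ) * T U (b i) = T U W := by
  have hc : ∀ i : Fin n, (inner ℝ W (b i) : ℝ) = inner ℝ (b i) W := fun i => real_inner_comm _ _
  simp_rw [hc]
  conv_rhs => rw [← b.sum_repr W]
  simp [map_sum, b.repr_apply_apply, smul_eq_mul]

private lemma bfd_c2' (b : OrthonormalBasis (Fin n) ℝ V) (T : V →ₗ[ℝ] V →ₗ[ℝ] ℝ) (U W : V) :
    ∑ i, (inner ℝ (b i) W : ℝ) * T U (b i) = T U W := by
  have hc : ∀ i : Fin n, (inner ℝ (b i) W : ℝ) = inner ℝ W (b i) := fun i => real_inner_comm _ _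
  simp_rw [hc]
  exact bfd_c2 b T U W

end AuxBFD

theorem bilinear_forms_decomposition
    {V : Type*} [NormedAddCommGroup V] [InnerProductSpace ℝ V]
    (n : ℕ) (hn : 2 < n) (b : OrthonormalBasis (Fin n) ℝ V)
    (A B F : V →ₗ[ℝ] V →ₗ[ℝ] ℝ)
    (h : ∀ X Y U W : V,
      (inner ℝ X Y : ℝ) * F U W + (inner ℝ U W : ℝ) * B X Y
      + (inner ℝ Y W : ℝ) * A X U + (inner ℝ X W : ℝ) * A Y U
      + (inner ℝ Y U : ℝ) * A X W + (inner ℝ X U : ℝ) * A Y W = 0) :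
    (∀ X Y, F X Y = F Y X) ∧ (∀ X Y, B X Y = B Y X) ∧ (∀ X Y, A X Y = 0)
    ∧ (∀ X Y, B X Y + F X Y = 0)
    ∧ (∀ X Y, (n : ℝ) * F X Y = (∑ i, F (b i) (b i)) * (inner ℝ X Y : ℝ))
    ∧ (∀ X Y, (n : ℝ) * B X Y = (∑ i, B (b i) (b i)) * (inner ℝ X Y : ℝ)) := by
  have hn3 : (3 : ℝ) ≤ (n : ℝ) := by exact_mod_cast hn
  have hn0 : (n : ℝ) ≠ 0 := by positivity
  set tA := ∑ i, A (b i) (b i) with htAdef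
  set tB := ∑ i, B (b i) (b i) with htBdef
  set tF := ∑ i, F (b i) (b i) with htFdef
  -- e1: contract X = Y
  have e1 : ∀ U W : V, (n : ℝ) * F U W + (inner ℝ U W : ℝ) * tB
      + A W U + A W U + A U W + A U W = 0 := by
    intro U W
    have h0 : ∑ i, ((inner ℝ (b i) (b i) : ℝ) * F U W + (inner ℝ U W : ℝ) * B (b i) (b i)
        + (inner ℝ (b i) W : ℝ) * A (b i) U + (inner ℝ (b i) W : ℝ) * A (b i) U
        + (inner ℝ (b i) U : ℝ) * A (b i) W + (inner ℝ (b i) U : ℝ) * A (b i) W) = 0 :=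
      Finset.sum_eq_zero fun i _ => h (b i) (b i) U W
    simp only [Finset.sum_add_distrib] at h0
    rw [← Finset.sum_mul, bfd_tr b, ← Finset.mul_sum, bfd_c1 b A W U, bfd_c1 b A U W] at h0
    exact h0
  -- e2: contract U = W
  have e2 : ∀ X Y : V, (inner ℝ X Y : ℝ) * tF + (n : ℝ) * B X Y
      + A X Y + A Y X + A X Y + A Y X = 0 := by
    intro X Y
    have h0 : ∑ i, ((inner ℝ X Y : ℝ) * F (b i) (b i) + (inner ℝ (b i) (b i) : ℝ) * B X Y
        + (inner ℝ Y (b i) : ℝ) * A X (b i) + (inner ℝ X (b i) : ℝ) * A Y (b i)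
        + (inner ℝ Y (b i) : ℝ) * A X (b i) + (inner ℝ X (b i) : ℝ) * A Y (b i)) = 0 :=
      Finset.sum_eq_zero fun i _ => h X Y (b i) (b i)
    simp only [Finset.sum_add_distrib] at h0
    rw [← Finset.mul_sum, ← Finset.sum_mul, bfd_tr b, bfd_c2 b A X Y, bfd_c2 b A Y X] at h0
    exact h0
  -- e3: contract Y = W
  have e3 : ∀ X U : V, F U X + B X U + (n : ℝ) * A X U
      + A X U + A X U + (inner ℝ X U : ℝ) * tA = 0 := by
    intro X U
    have h0 : ∑ i, ((inner ℝ X (b i) : ℝ) * F U (b i) + (inner ℝ U (b i) : ℝ) * B X (b i)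
        + (inner ℝ (b i) (b i) : ℝ) * A X U + (inner ℝ X (b i) : ℝ) * A (b i) U
        + (inner ℝ (b i) U : ℝ) * A X (b i) + (inner ℝ X U : ℝ) * A (b i) (b i)) = 0 :=
      Finset.sum_eq_zero fun i _ => h X (b i) U (b i)
    simp only [Finset.sum_add_distrib] at h0
    rw [bfd_c2 b F U X, bfd_c2 b B X U, ← Finset.sum_mul, bfd_tr b,
      bfd_c1' b A X U, bfd_c2' b A X U, ← Finset.mul_sum] at h0
    exact h0
  -- e4: contract X = W
  have e4 : ∀ Y U : V, F U Y + B U Y + A Y U + (n : ℝ) * A Y U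
      + (inner ℝ Y U : ℝ) * tA + A Y U = 0 := by
    intro Y U
    have h0 : ∑ i, ((inner ℝ (b i) Y : ℝ) * F U (b i) + (inner ℝ U (b i) : ℝ) * B (b i) Y
        + (inner ℝ Y (b i) : ℝ) * A (b i) U + (inner ℝ (b i) (b i) : ℝ) * A Y U
        + (inner ℝ Y U : ℝ) * A (b i) (b i) + (inner ℝ (b i) U : ℝ) * A Y (b i)) = 0 :=
      Finset.sum_eq_zero fun i _ => h (b i) Y U (b i)
    simp only [Finset.sum_add_distrib] at h0
    rw [bfd_c2' b F U Y, bfd_c1' b B U Y, bfd_c1' b A Y U, ← Finset.sum_mul, bfd_tr b,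
      ← Finset.mul_sum, bfd_c2' b A Y U] at h0
    exact h0
  -- symmetry of F
  have Fsym : ∀ U W : V, F U W = F W U := by
    intro U W
    have h1 := e1 U W
    have h2 := e1 W U
    have hc : (inner ℝ U W : ℝ) = inner ℝ W U := real_inner_comm _ _
    rw [hc] at h1
    have : (n : ℝ) * F U W = (n : ℝ) * F W U := by linarith
    exact mul_left_cancel₀ hn0 this
  -- symmetry of B
  have Bsym : ∀ X U : V, B X U = B U X := by
    intro X U
    have h1 := e3 X U
    have h2 := e4 X U
    linarith
  -- symmetry of A
  have Asym : ∀ X U : V, A X U = A U X := by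
    intro X U
    have h1 := e3 X U
    have h2 := e3 U X
    have hfc : F U X = F X U := Fsym U X
    have hbc : B X U = B U X := Bsym X U
    have hic : (inner ℝ X U : ℝ) = inner ℝ U X := real_inner_comm _ _
    have key : ((n : ℝ) + 2) * A X U = ((n : ℝ) + 2) * A U X := by
      linear_combination h1 - h2 - hfc - hbc - tA * hic
    have hne : ((n : ℝ) + 2) ≠ 0 := by positivity
    exact mul_left_cancel₀ hne key
  -- trace equations
  have s1 : (n : ℝ) * tF + (n : ℝ) * tB + tA + tA + tA + tA = 0 := by
    have h0 : ∑ i, ((n : ℝ) * F (b i) (b i) + (inner ℝ (b i) (b i) : ℝ) * tB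
        + A (b i) (b i) + A (b i) (b i) + A (b i) (b i) + A (b i) (b i)) = 0 :=
      Finset.sum_eq_zero fun i _ => e1 (b i) (b i)
    simp only [Finset.sum_add_distrib] at h0
    rw [← Finset.mul_sum, ← Finset.sum_mul, bfd_tr b] at h0
    rw [← htAdef, ← htFdef] at h0
    linarith
  have s3 : tF + tB + (n : ℝ) * tA + tA + tA + (n : ℝ) * tA = 0 := by
    have h0 : ∑ i, (F (b i) (b i) + B (b i) (b i) + (n : ℝ) * A (b i) (b i)
        + A (b i) (b i) + A (b i) (b i) + (inner ℝ (b i) (b i) : ℝ) * tA) = 0 :=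
      Finset.sum_eq_zero fun i _ => e3 (b i) (b i)
    simp only [Finset.sum_add_distrib] at h0
    rw [← Finset.mul_sum, ← Finset.sum_mul, bfd_tr b] at h0
    rw [← htAdef, ← htBdef, ← htFdef] at h0
    linarith
  -- trace of A vanishes
  have htA : tA = 0 := by
    have s3n : (n : ℝ) * (tF + tB + (n : ℝ) * tA + tA + tA + (n : ℝ) * tA) = 0 := by
      rw [s3]; ring
    have key : (2 * (n : ℝ) ^ 2 + 2 * (n : ℝ) - 4) * tA = 0 := by
      linear_combination s3n - s1
    have hpos : (0 : ℝ) < 2 * (n : ℝ) ^ 2 + 2 * (n : ℝ) - 4 := by nlinarith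
    exact (mul_eq_zero.mp key).resolve_left (ne_of_gt hpos)
  have htFB : tF + tB = 0 := by
    rw [htA] at s3; linarith
  -- A vanishes
  have hA : ∀ X Y : V, A X Y = 0 := by
    intro X Y
    have h1 := e1 X Y
    have h2 := e2 X Y
    have h3 := e3 X Y
    have h3n : (n : ℝ) * (F Y X + B X Y + (n : ℝ) * A X Y + A X Y + A X Y
        + (inner ℝ X Y : ℝ) * tA) = 0 := by rw [h3]; ring
    have hf : F Y X = F X Y := Fsym Y X
    have ha : A Y X = A X Y := Asym Y X
    have hg : (inner ℝ X Y : ℝ) * tB + (inner ℝ X Y : ℝ) * tF = 0 := by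
      rw [← mul_add, show tB + tF = 0 by linarith, mul_zero]
    have key : ((n : ℝ) ^ 2 + 2 * (n : ℝ) - 8) * A X Y = 0 := by
      linear_combination h3n - h1 - h2 + hg - (n : ℝ) * hf + 4 * ha
        - ((n : ℝ) * (inner ℝ X Y : ℝ)) * htA
    have hpos : (0 : ℝ) < (n : ℝ) ^ 2 + 2 * (n : ℝ) - 8 := by nlinarith
    exact (mul_eq_zero.mp key).resolve_left (ne_of_gt hpos)
  refine ⟨Fsym, Bsym, hA, ?_, ?_, ?_⟩
  · intro X Y
    have h3 := e3 X Y
    have hf : F Y X = F X Y := Fsym Y X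
    have ha := hA X Y
    rw [ha] at h3
    rw [htA] at h3
    linarith
  · intro X Y
    have h1 := e1 X Y
    linear_combination h1 - 2 * hA X Y - 2 * hA Y X - (inner ℝ X Y : ℝ) * htFB
  · intro X Y
    have h2 := e2 X Y
    linear_combination h2 - 2 * hA X Y - 2 * hA Y X - (inner ℝ X Y : ℝ) * htFB
end

section
/- Let V be a finite-dimensional real inner product space of dimension n > 2, g its inner product, and A, B, F symmetric bilinear forms satisfying g(X,Y)F(U,V) + g(U,V)B(X,Y) + g(Y,V)A(X,U) + g(X,V)A(Y,U) + g(Y,U)A(X,V) + g(X,U)A(Y,V) = 0 for all X, Y, U, V. Then Tr A = 0 and Tr F + Tr B = 0. -/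
theorem bilinear_forms_traces
    {V : Type*} [NormedAddCommGroup V] [InnerProductSpace ℝ V]
    (n : ℕ) (hn : 2 < n) (b : OrthonormalBasis (Fin n) ℝ V)
    (A B F : V →ₗ[ℝ] V →ₗ[ℝ] ℝ)
    (hAs : ∀ X Y, A X Y = A Y X) (hBs : ∀ X Y, B X Y = B Y X)
    (hFs : ∀ X Y, F X Y = F Y X)
    (h : ∀ X Y U W : V,
      (inner ℝ X Y : ℝ) * F U W + (inner ℝ U W : ℝ) * B X Y
      + (inner ℝ Y W : ℝ) * A X U + (inner ℝ X W : ℝ) * A Y U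
      + (inner ℝ Y U : ℝ) * A X W + (inner ℝ X U : ℝ) * A Y W = 0) :
    (∑ i, A (b i) (b i)) = 0 ∧ (∑ i, F (b i) (b i)) + (∑ i, B (b i) (b i)) = 0 := by
  have hb : ∀ i j : Fin n, (inner ℝ (b i) (b j) : ℝ) = if i = j then 1 else 0 :=
    orthonormal_iff_ite.mp b.orthonormal
  set tA := ∑ i, A (b i) (b i) with htA
  set tB := ∑ i, B (b i) (b i) with htB
  set tF := ∑ i, F (b i) (b i) with htF
  have key1 : ∀ i j : Fin n,
      F (b j) (b j) + B (b i) (b i) + (if i = j then (4:ℝ) * A (b i) (b j) else 0) = 0 := by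
    intro i j
    have hh := h (b i) (b i) (b j) (b j)
    simp only [hb] at hh
    by_cases hij : i = j
    · subst hij; simp at hh ⊢; linarith
    · simp [hij, Ne.symm hij] at hh ⊢; linarith
  have key2 : ∀ i j : Fin n,
      (if i = j then F (b i) (b j) + B (b i) (b j) + A (b i) (b j) + A (b j) (b i) else 0)
        + A (b i) (b i) + A (b j) (b j) = 0 := by
    intro i j
    have hh := h (b i) (b j) (b i) (b j)
    simp only [hb] at hh
    by_cases hij : i = j
    · subst hij; simp at hh ⊢; linarith
    · simp [hij, Ne.symm hij] at hh ⊢; linarith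
  have e1 : (n:ℝ) * tF + (n:ℝ) * tB + 4 * tA = 0 := by
    have hs : ∑ i : Fin n, ∑ j : Fin n,
        (F (b j) (b j) + B (b i) (b i) + (if i = j then (4:ℝ) * A (b i) (b j) else 0)) = 0 := by
      simp [key1]
    rw [Finset.sum_comm] at hs
    simp only [Finset.sum_add_distrib, Finset.sum_const, Finset.card_univ, Fintype.card_fin,
      nsmul_eq_mul] at hs
    rw [Finset.sum_comm (f := fun j i => if i = j then (4:ℝ) * A (b i) (b j) else 0)] at hs
    simp only [Finset.sum_ite_eq, Finset.mem_univ, if_true] at hs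
    simp only [← Finset.mul_sum] at hs
    rw [← htA, ← htB, ← htF] at hs
    linarith [hs]
  have e2 : tF + tB + (2 * (n:ℝ) + 2) * tA = 0 := by
    have hs : ∑ i : Fin n, ∑ j : Fin n,
        ((if i = j then F (b i) (b j) + B (b i) (b j) + A (b i) (b j) + A (b j) (b i) else 0)
          + A (b i) (b i) + A (b j) (b j)) = 0 := by
      simp [key2]
    simp only [Finset.sum_add_distrib, Finset.sum_ite_eq, Finset.mem_univ, if_true,
      Finset.sum_const, Finset.card_univ, Fintype.card_fin, nsmul_eq_mul] at hs
    simp only [← Finset.mul_sum] at hs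
    rw [← htA, ← htB, ← htF] at hs
    linarith [hs]
  have hn3 : (3:ℝ) ≤ (n:ℝ) := by exact_mod_cast hn
  have hA0 : tA = 0 := by
    have h4 : (2 * (n:ℝ)^2 + 2 * (n:ℝ) - 4) * tA = 0 := by nlinarith [e1, e2]
    have hc : (0:ℝ) < 2 * (n:ℝ)^2 + 2 * (n:ℝ) - 4 := by nlinarith
    rcases mul_eq_zero.mp h4 with h' | h'
    · linarith
    · exact h'
  refine ⟨hA0, ?_⟩
  rw [hA0] at e2; linarith
end

section
/- Let a₁, a₂, A, b, b₂ be real numbers with a := a₁·A − a₂² ≠ 0, and suppose 2b·a₂ − a₁·b₂ = 0 with a₁·a₂·b₂ ≠ 0. Then every solution (X̄, Ȳ, S̄, K̄) ∈ ℝ⁴ of the system A·X̄ + a₂·Ȳ = 0; a₂·X̄ + a₁·Ȳ + a₂·S̄ + A·K̄ = 0; a₁·S̄ + a₂·K̄ = 0; 2b·S̄ + b₂·K̄ = 0 satisfies X̄ + S̄ = 0, a₂·Ȳ = A·S̄, and a₂·K̄ = −a₁·S̄. -/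
theorem system_case2 (a₁ a₂ A b b₂ : ℝ) (ha : a₁ * A - a₂ ^ 2 ≠ 0)
    (hdeg : 2 * b * a₂ - a₁ * b₂ = 0) (hne : a₁ * a₂ * b₂ ≠ 0)
    (X Y S K : ℝ)
    (h1 : A * X + a₂ * Y = 0)
    (h2 : a₂ * X + a₁ * Y + a₂ * S + A * K = 0)
    (h3 : a₁ * S + a₂ * K = 0)
    (h4 : 2 * b * S + b₂ * K = 0) :
    X + S = 0 ∧ a₂ * Y = A * S ∧ a₂ * K = -(a₁ * S) := by
  have key : (a₁ * A - a₂ ^ 2) * (X + S) = 0 := by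
    linear_combination a₁ * h1 - a₂ * h2 + A * h3
  have hXS : X + S = 0 := by
    rcases mul_eq_zero.mp key with h | h
    · exact absurd h ha
    · exact h
  refine ⟨hXS, ?_, by linarith⟩
  have : S = -X := by linarith
  rw [this]
  linarith
end
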